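/- Consider a two-player game setting: strategy sets S_1 = {1,…,k_1} and S_2 = {1,…,k_2} with k_1, k_2 ≥ 2, and positive weights w_1 : S_2 → ℝ_{>0}, w_2 : S_1 → ℝ_{>0}. For each pair (i_1, i_2) with 2 ≤ i_1 ≤ k_1 and 2 ≤ i_2 ≤ k_2, define the game x_{i_1,i_2} = (c_1, c_2) by c_1(x_1,x_2) = (1/w_1(x_2))·(1{x_1=1} − 1{x_1=i_1})·(1{x_2=1} − 1{x_2=i_2}) and c_2(x_1,x_2) = −(1/w_2(x_1))·(1{x_1=1} − 1{x_1=i_1})·(1{x_2=1} − 1{x_2=i_2}), where 1{·} denotes the indicator. Then these (k_1−1)(k_2−1) games are linearly independent and form a basis of the coset weighted pure harmonic subspace ℋ^{cw}, i.e. the orthogonal complement in 𝒢 of the subspace of coset weighted potential games with respect to (w_1,w_2). -/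

import Mathlib

/-- The space of two-player games with strategy sets `Fin k₁`, `Fin k₂`:
a pair of payoff functions `(c₁, c₂)`. -/
abbrev TwoGame (k₁ k₂ : ℕ) := (Fin k₁ → Fin k₂ → ℝ) × (Fin k₁ → Fin k₂ → ℝ)

/-- `(c₁, c₂)` is a coset weighted potential game with respect to the positive
weights `w₁ : S₂ → ℝ`, `w₂ : S₁ → ℝ`. -/
def IsCWPG2 {k₁ k₂ : ℕ} (w₁ : Fin k₂ → ℝ) (w₂ : Fin k₁ → ℝ) (c : TwoGame k₁ k₂) : Prop :=
  ∃ P : Fin k₁ → Fin k₂ → ℝ,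
    (∀ (s₂ : Fin k₂) (x y : Fin k₁), c.1 x s₂ - c.1 y s₂ = w₁ s₂ * (P x s₂ - P y s₂)) ∧
    (∀ (s₁ : Fin k₁) (x y : Fin k₂), c.2 s₁ x - c.2 s₁ y = w₂ s₁ * (P s₁ x - P s₁ y))

/-- The inner product `⟨c, c'⟩ = Σ_{i=1}^2 Σ_{s∈S} c_i(s) c'_i(s)`. -/
noncomputable def twoGameInner {k₁ k₂ : ℕ} (c c' : TwoGame k₁ k₂) : ℝ :=
  (∑ s₁ : Fin k₁, ∑ s₂ : Fin k₂, c.1 s₁ s₂ * c'.1 s₁ s₂) +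
  (∑ s₁ : Fin k₁, ∑ s₂ : Fin k₂, c.2 s₁ s₂ * c'.2 s₁ s₂)

/-- The game `x_{i₁,i₂}` of Section 3.3 (here `0`-indexed: the paper's strategy `1`
is index `0` and the paper's indices `i₁, i₂ ∈ {2,…,k}` are the nonzero indices):
`c₁(x₁,x₂) = (1/w₁(x₂))·(1{x₁=1} − 1{x₁=i₁})·(1{x₂=1} − 1{x₂=i₂})` and
`c₂(x₁,x₂) = −(1/w₂(x₁))·(1{x₁=1} − 1{x₁=i₁})·(1{x₂=1} − 1{x₂=i₂})`. -/
noncomputable def harmonicBasisGame {k₁ k₂ : ℕ} (hk₁ : 2 ≤ k₁) (hk₂ : 2 ≤ k₂)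
    (w₁ : Fin k₂ → ℝ) (w₂ : Fin k₁ → ℝ) (i₁ : Fin k₁) (i₂ : Fin k₂) :
    TwoGame k₁ k₂ :=
  (fun x₁ x₂ => (1 / w₁ x₂) *
      ((if x₁ = (⟨0, by omega⟩ : Fin k₁) then 1 else 0) - (if x₁ = i₁ then 1 else 0)) *
      ((if x₂ = (⟨0, by omega⟩ : Fin k₂) then 1 else 0) - (if x₂ = i₂ then 1 else 0)),
   fun x₁ x₂ => -(1 / w₂ x₁) *
      ((if x₁ = (⟨0, by omega⟩ : Fin k₁) then 1 else 0) - (if x₁ = i₁ then 1 else 0)) *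
      ((if x₂ = (⟨0, by omega⟩ : Fin k₂) then 1 else 0) - (if x₂ = i₂ then 1 else 0)))

/-!
A game `c` is orthogonal to all coset weighted potential games iff
`w₁(s₂) c₁(s) + w₂(s₁) c₂(s) = 0` for every profile `s` (test against the potential games whose
potential is an indicator) and `c₁` has zero column sums, `c₂` zero row sums (test against the
games in which each player's payoff ignores their own strategy). Equivalently,
`c = (M / w₁, -M / w₂)` for a matrix `M` all of whose row and column sums vanish.
The game `x_{i₁,i₂}` is the image of `(e₁ - e_{i₁})(e₁ - e_{i₂})ᵀ`, and these matrices form a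
basis of the doubly centered matrices: such an `M` equals
`Σ_{i₁,i₂ ≥ 2} M(i₁,i₂) (e₁ - e_{i₁})(e₁ - e_{i₂})ᵀ`, and a coefficient is read off at the
corresponding entry.
-/

open Finset

theorem sum_mul_eq_zero_of_sum_eq_zero {ι R : Type*} [Fintype ι] [CommRing R] {m g : ι → R}
    (hm : ∑ i, m i = 0) (hg : ∀ i j, g i = g j) : ∑ i, m i * g i = 0 := by
  rcases isEmpty_or_nonempty ι with _ | ⟨⟨i₀⟩⟩
  · simp
  · rw [sum_congr rfl fun i _ => by rw [hg i i₀], ← sum_mul, hm, zero_mul]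

section CenteredMatrices

variable {R α β : Type*} [CommRing R] [DecidableEq α] [DecidableEq β]

def diffSingle (z i : α) : α → R := Pi.single z 1 - Pi.single i 1

def diffTensor (z₁ : α) (z₂ : β) (i : α) (j : β) : α → β → R :=
  fun a b => diffSingle z₁ i a * diffSingle z₂ j b

theorem diffTensor_apply_of_ne {z₁ i a : α} {z₂ j b : β} (ha : a ≠ z₁) (hb : b ≠ z₂) :
    diffTensor (R := R) z₁ z₂ i j a b = if a = i ∧ b = j then 1 else 0 := by
  rcases eq_or_ne a i with rfl | hi <;> rcases eq_or_ne b j with rfl | hj <;>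
    simp [diffTensor, diffSingle, *]

variable [Fintype α] [Fintype β]

variable (R α β) in
def doublyCentered : Submodule R (α → β → R) where
  carrier := {M | (∀ a, ∑ b, M a b = 0) ∧ ∀ b, ∑ a, M a b = 0}
  add_mem' := by
    rintro M N ⟨hM₁, hM₂⟩ ⟨hN₁, hN₂⟩
    exact ⟨fun a => by simp [sum_add_distrib, hM₁, hN₁],
      fun b => by simp [sum_add_distrib, hM₂, hN₂]⟩
  zero_mem' := by simp
  smul_mem' := by
    rintro r M ⟨hM₁, hM₂⟩
    exact ⟨fun a => by simp [← mul_sum, hM₁], fun b => by simp [← mul_sum, hM₂]⟩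

theorem sum_diffSingle (z i : α) : ∑ a, diffSingle (R := R) z i a = 0 := by
  simp [diffSingle, sum_sub_distrib]

theorem sum_subtype_ne_mul_diffSingle {f : α → R} (hf : ∑ i, f i = 0) (z a : α) :
    ∑ i : {i // i ≠ z}, f i * diffSingle z i a = -f a := by
  have hz : f z * diffSingle z z a = 0 := by simp [diffSingle]
  rw [← zero_add (∑ i : {i // i ≠ z}, _), ← hz,
    ← Fintype.sum_eq_add_sum_subtype_ne (fun i => f i * diffSingle z i a)]
  simp [diffSingle, mul_sub, sum_sub_distrib, hf, Pi.single_apply]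

theorem diffTensor_mem_doublyCentered (z₁ i : α) (z₂ j : β) :
    diffTensor (R := R) z₁ z₂ i j ∈ doublyCentered R α β :=
  ⟨fun a => by simp [diffTensor, ← mul_sum, sum_diffSingle],
    fun b => by simp [diffTensor, ← sum_mul, sum_diffSingle]⟩

theorem eq_sum_smul_diffTensor {M : α → β → R} (hM : M ∈ doublyCentered R α β) (z₁ : α) (z₂ : β) :
    M = ∑ p : {i // i ≠ z₁} × {j // j ≠ z₂}, M p.1 p.2 • diffTensor z₁ z₂ p.1 p.2 := by
  ext a b
  have hcol : ∀ i, ∑ j : {j // j ≠ z₂}, M i j * diffSingle z₂ j b = -M i b :=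
    fun i => sum_subtype_ne_mul_diffSingle (hM.1 i) z₂ b
  calc M a b = ∑ i : {i // i ≠ z₁}, -M i b * diffSingle z₁ i a := by
        rw [sum_subtype_ne_mul_diffSingle (f := fun i => -M i b) (by simp [hM.2 b]), neg_neg]
    _ = ∑ i : {i // i ≠ z₁}, ∑ j : {j // j ≠ z₂},
          M i j * (diffSingle z₁ i a * diffSingle z₂ j b) := by
        simp only [← hcol, sum_mul]
        exact sum_congr rfl fun i _ => sum_congr rfl fun j _ => by ring
    _ = (∑ p : {i // i ≠ z₁} × {j // j ≠ z₂}, M p.1 p.2 • diffTensor z₁ z₂ p.1 p.2) a b := by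
        simp [Fintype.sum_prod_type, diffTensor]

theorem span_range_diffTensor (z₁ : α) (z₂ : β) :
    Submodule.span R (Set.range fun p : {i // i ≠ z₁} × {j // j ≠ z₂} => diffTensor z₁ z₂ p.1 p.2) =
      doublyCentered R α β := by
  refine le_antisymm (Submodule.span_le.mpr ?_) fun M hM => ?_
  · rintro _ ⟨p, rfl⟩
    exact diffTensor_mem_doublyCentered z₁ p.1 z₂ p.2
  · exact (Submodule.mem_span_range_iff_exists_fun R).mpr
      ⟨_, (eq_sum_smul_diffTensor hM z₁ z₂).symm⟩

theorem linearIndependent_diffTensor (z₁ : α) (z₂ : β) :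
    LinearIndependent R
      fun p : {i // i ≠ z₁} × {j // j ≠ z₂} => diffTensor (R := R) z₁ z₂ p.1 p.2 := by
  refine Fintype.linearIndependent_iff.mpr fun g hg q => ?_
  have hq := congrFun (congrFun hg q.1) q.2
  simp only [Finset.sum_apply, Pi.smul_apply, smul_eq_mul, diffTensor_apply_of_ne q.1.2 q.2.2] at hq
  simpa only [← Subtype.ext_iff, ← Prod.ext_iff, mul_ite, mul_one, mul_zero, sum_ite_eq,
    mem_univ, if_true, Pi.zero_apply] using hq

end CenteredMatrices

section Games

variable {k₁ k₂ : ℕ} {w₁ : Fin k₂ → ℝ} {w₂ : Fin k₁ → ℝ}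

variable (w₁ w₂) in
noncomputable def harmonicGameOf : (Fin k₁ → Fin k₂ → ℝ) →ₗ[ℝ] TwoGame k₁ k₂ where
  toFun M := (fun a b => M a b / w₁ b, fun a b => -(M a b / w₂ a))
  map_add' M N := by ext <;> simp only [Pi.add_apply, Prod.fst_add, Prod.snd_add] <;> ring
  map_smul' r M := by ext <;> simp [mul_div_assoc]

theorem harmonicGameOf_injective (hw₁ : ∀ b, w₁ b ≠ 0) :
    Function.Injective (harmonicGameOf w₁ w₂) := fun M N h => by
  ext a b
  exact (div_left_inj' (hw₁ b)).mp (congrFun (congrFun (congrArg Prod.fst h) a) b)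

theorem harmonicBasisGame_eq (hk₁ : 2 ≤ k₁) (hk₂ : 2 ≤ k₂) (i₁ : Fin k₁) (i₂ : Fin k₂) :
    harmonicBasisGame hk₁ hk₂ w₁ w₂ i₁ i₂ =
      harmonicGameOf w₁ w₂ (diffTensor ⟨0, by omega⟩ ⟨0, by omega⟩ i₁ i₂) := by
  ext a b <;>
    simp only [harmonicBasisGame, harmonicGameOf, LinearMap.coe_mk, AddHom.coe_mk, diffTensor,
      diffSingle, Pi.sub_apply, Pi.single_apply] <;> ring

theorem isCWPG2_potential (P : Fin k₁ → Fin k₂ → ℝ) :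
    IsCWPG2 w₁ w₂ (fun a b => w₁ b * P a b, fun a b => w₂ a * P a b) :=
  ⟨P, fun _ _ _ => by ring, fun _ _ _ => by ring⟩

theorem isCWPG2_nonstrategic (f : Fin k₂ → ℝ) (g : Fin k₁ → ℝ) :
    IsCWPG2 w₁ w₂ (fun _ b => f b, fun a _ => g a) :=
  ⟨0, fun _ _ _ => by simp, fun _ _ _ => by simp⟩

theorem twoGameInner_harmonicGameOf_eq_zero (hw₁ : ∀ b, w₁ b ≠ 0) (hw₂ : ∀ a, w₂ a ≠ 0)
    {M : Fin k₁ → Fin k₂ → ℝ} (hM : M ∈ doublyCentered ℝ (Fin k₁) (Fin k₂))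
    {c : TwoGame k₁ k₂} (hc : IsCWPG2 w₁ w₂ c) :
    twoGameInner (harmonicGameOf w₁ w₂ M) c = 0 := by
  obtain ⟨P, h₁, h₂⟩ := hc
  have hu : ∀ b a a', c.1 a b / w₁ b - P a b = c.1 a' b / w₁ b - P a' b := fun b a a' => by
    rw [sub_eq_sub_iff_sub_eq_sub, ← sub_div, h₁, mul_div_cancel_left₀ _ (hw₁ b)]
  have hv : ∀ a b b', c.2 a b / w₂ a - P a b = c.2 a b' / w₂ a - P a b' := fun a b b' => by
    rw [sub_eq_sub_iff_sub_eq_sub, ← sub_div, h₂, mul_div_cancel_left₀ _ (hw₂ a)]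
  calc twoGameInner (harmonicGameOf w₁ w₂ M) c
      = ∑ a, ∑ b, M a b * (c.1 a b / w₁ b - P a b) -
          ∑ a, ∑ b, M a b * (c.2 a b / w₂ a - P a b) := by
        simp only [twoGameInner, harmonicGameOf, LinearMap.coe_mk, AddHom.coe_mk]
        rw [← sum_add_distrib, ← sum_sub_distrib]
        refine sum_congr rfl fun a _ => ?_
        rw [← sum_add_distrib, ← sum_sub_distrib]
        exact sum_congr rfl fun b _ => by ring
    _ = 0 := by
        rw [sum_comm, sum_eq_zero fun b _ => sum_mul_eq_zero_of_sum_eq_zero (hM.2 b) (hu b),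
          sum_eq_zero fun a _ => sum_mul_eq_zero_of_sum_eq_zero (hM.1 a) (hv a), sub_zero]

theorem exists_harmonicGameOf_eq_of_forall_twoGameInner_eq_zero (hw₁ : ∀ b, w₁ b ≠ 0)
    (hw₂ : ∀ a, w₂ a ≠ 0) {c : TwoGame k₁ k₂}
    (hc : ∀ c', IsCWPG2 w₁ w₂ c' → twoGameInner c c' = 0) :
    ∃ M ∈ doublyCentered ℝ (Fin k₁) (Fin k₂), harmonicGameOf w₁ w₂ M = c := by
  have hweighted : ∀ a b, w₁ b * c.1 a b + w₂ a * c.2 a b = 0 := fun a b => by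
    simpa [twoGameInner, Pi.single_apply, ite_apply, mul_comm] using
      hc _ (isCWPG2_potential (Pi.single a (Pi.single b 1)))
  have hcol : ∀ b, ∑ a, c.1 a b = 0 := fun b => by
    simpa [twoGameInner, Pi.single_apply] using
      hc _ (isCWPG2_nonstrategic (w₁ := w₁) (w₂ := w₂) (Pi.single b 1) 0)
  have hrow : ∀ a, ∑ b, c.2 a b = 0 := fun a => by
    simpa [twoGameInner, ← sum_mul, Pi.single_apply] using
      hc _ (isCWPG2_nonstrategic (w₁ := w₁) (w₂ := w₂) 0 (Pi.single a 1))
  refine ⟨fun a b => w₁ b * c.1 a b, ⟨fun a => ?_, fun b => ?_⟩, ?_⟩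
  · calc ∑ b, w₁ b * c.1 a b = ∑ b, -(w₂ a * c.2 a b) :=
          sum_congr rfl fun b _ => eq_neg_of_add_eq_zero_left (hweighted a b)
      _ = 0 := by rw [sum_neg_distrib, ← mul_sum, hrow, mul_zero, neg_zero]
  · rw [← mul_sum, hcol, mul_zero]
  · ext a b
    · simp [harmonicGameOf, hw₁ b]
    · simp only [harmonicGameOf, LinearMap.coe_mk, AddHom.coe_mk]
      rw [neg_eq_iff_eq_neg, div_eq_iff (hw₂ a)]
      linear_combination hweighted a b

theorem mem_map_harmonicGameOf_iff (hw₁ : ∀ b, w₁ b ≠ 0) (hw₂ : ∀ a, w₂ a ≠ 0)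
    (c : TwoGame k₁ k₂) :
    c ∈ (doublyCentered ℝ (Fin k₁) (Fin k₂)).map (harmonicGameOf w₁ w₂) ↔
      ∀ c', IsCWPG2 w₁ w₂ c' → twoGameInner c c' = 0 := by
  refine ⟨?_, exists_harmonicGameOf_eq_of_forall_twoGameInner_eq_zero hw₁ hw₂⟩
  rintro ⟨M, hM, rfl⟩ c' hc'
  exact twoGameInner_harmonicGameOf_eq_zero hw₁ hw₂ hM hc'

end Games

theorem two_player_harmonic_basis (k₁ k₂ : ℕ) (hk₁ : 2 ≤ k₁) (hk₂ : 2 ≤ k₂)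
    (w₁ : Fin k₂ → ℝ) (w₂ : Fin k₁ → ℝ)
    (hw₁ : ∀ s₂, 0 < w₁ s₂) (hw₂ : ∀ s₁, 0 < w₂ s₁) :
    LinearIndependent ℝ
      (fun p : {i₁ : Fin k₁ // i₁ ≠ ⟨0, by omega⟩} × {i₂ : Fin k₂ // i₂ ≠ ⟨0, by omega⟩} =>
        harmonicBasisGame hk₁ hk₂ w₁ w₂ p.1.1 p.2.1) ∧
    (∀ c : TwoGame k₁ k₂,
      c ∈ Submodule.span ℝ (Set.range
        (fun p : {i₁ : Fin k₁ // i₁ ≠ ⟨0, by omega⟩} × {i₂ : Fin k₂ // i₂ ≠ ⟨0, by omega⟩} =>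
          harmonicBasisGame hk₁ hk₂ w₁ w₂ p.1.1 p.2.1)) ↔
      ∀ c' : TwoGame k₁ k₂, IsCWPG2 w₁ w₂ c' → twoGameInner c c' = 0) := by
  have hw₁' : ∀ b, w₁ b ≠ 0 := fun b => (hw₁ b).ne'
  have hfamily :
      (fun p : {i₁ : Fin k₁ // i₁ ≠ ⟨0, by omega⟩} × {i₂ : Fin k₂ // i₂ ≠ ⟨0, by omega⟩} =>
        harmonicBasisGame hk₁ hk₂ w₁ w₂ p.1.1 p.2.1) =
      harmonicGameOf w₁ w₂ ∘ fun p => diffTensor (R := ℝ) _ _ p.1.1 p.2.1 :=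
    funext fun p => harmonicBasisGame_eq hk₁ hk₂ p.1.1 p.2.1
  rw [hfamily, Set.range_comp, ← Submodule.map_span, span_range_diffTensor]
  exact ⟨(linearIndependent_diffTensor (R := ℝ) (⟨0, by omega⟩ : Fin k₁) ⟨0, by omega⟩).map' _
      (LinearMap.ker_eq_bot.mpr (harmonicGameOf_injective hw₁')),
    mem_map_harmonicGameOf_iff hw₁' fun a => (hw₂ a).ne'⟩
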